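/- Let λ₁ > 0 and φ > 0 be the first Dirichlet eigenvalue and eigenfunction of L_Δ in B₁(Re_n), so that L_Δ φ = λ₁ φ in B₁(Re_n), φ = 0 outside B₁(Re_n), φ is continuous on the closure and φ > 0 inside. Then there is no bounded function u ∈ C^{1,1}_loc ∩ L_0 that is continuous on the closed ball, positive on the closure of B₁(Re_n), satisfies L_Δ u ≥ λ₁ u in B₁(Re_n), and has u > 0 on ℝⁿ \ B₁(Re_n). -/

import Mathlib

open MeasureTheory Metric Filter Set

noncomputable section

/-- ℝⁿ with n = N+1 coordinates, Euclidean norm. -/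
abbrev E (n : ℕ) := EuclideanSpace ℝ (Fin (n+1))

/-- Reflection of a point across the hyperplane {x_n = λ}. -/
def reflect (n : ℕ) (lam : ℝ) (y : E n) : E n :=
  WithLp.toLp 2 (Function.update y.ofLp (Fin.last n) (2*lam - y (Fin.last n)))

/-- The first n coordinates x'. -/
def proj (n : ℕ) (x : E n) : EuclideanSpace ℝ (Fin n) := WithLp.toLp 2 (fun i : Fin n => x i.castSucc)

/-- The normalization constant C_n = π^{-d/2} Γ(d/2) with d = n+1 the dimension. -/
def Cconst (n : ℕ) : ℝ := Real.pi ^ (-(((n:ℝ)+1)/2)) * Real.Gamma (((n:ℝ)+1)/2)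

/-- Integrand of the logarithmic Laplacian. -/
def kern (n : ℕ) (u : E n → ℝ) (x y : E n) : ℝ :=
  ((Metric.ball x 1).indicator (fun _ => u x) y - u y) / ‖x - y‖ ^ (n+1)

/-- `logLapAt n u x L` : the principal value C_n P.V.∫ (u(x)1_{B₁(x)}(y)-u(y))/|x-y|ᵈ dy
exists and equals `L`, i.e. (-Δ)^L u (x) = L. -/
def logLapAt (n : ℕ) (u : E n → ℝ) (x : E n) (L : ℝ) : Prop :=
  Tendsto (fun ε : ℝ => Cconst n * ∫ y in {y : E n | ε < ‖x - y‖}, kern n u x y)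
    (nhdsWithin 0 (Set.Ioi 0)) (nhds L)

/-- The class L₀ of admissible functions. -/
def memL0 (n : ℕ) (u : E n → ℝ) : Prop :=
  Integrable (fun x : E n => |u x| / (1 + ‖x‖ ^ (n+1)))

/-- Locally C^{1,1} on a set: near each point, differentiable with locally Lipschitz derivative. -/
def C11loc (n : ℕ) (u : E n → ℝ) (s : Set (E n)) : Prop :=
  ∀ x ∈ s, ∃ t ∈ nhdsWithin x s, DifferentiableOn ℝ u t ∧
    ∃ K, LipschitzOnWith K (fderiv ℝ u) t

/-- Digamma function ψ = Γ'/Γ. -/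
def digamma (s : ℝ) : ℝ := deriv Real.Gamma s / Real.Gamma s

/-- Euler–Mascheroni constant γ = -Γ'(1). -/
def eulerGamma : ℝ := -(deriv Real.Gamma 1)

/-- ρ_d = 2 ln 2 + ψ(d/2) - γ for dimension d = n+1. -/
def rho (n : ℕ) : ℝ := 2 * Real.log 2 + digamma (((n:ℝ)+1)/2) - eulerGamma

/-- The coercive Lipschitz epigraph Ω = {x : x_n > φ(x')}. -/
def Omega (n : ℕ) (phi : EuclideanSpace ℝ (Fin n) → ℝ) : Set (E n) :=
  {x | phi (proj n x) < x (Fin.last n)}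

/-- The half space Σ_λ = {x_n < λ}. -/
def SigmaLam (n : ℕ) (lam : ℝ) : Set (E n) := {x | x (Fin.last n) < lam}

lemma Cconst_pos (n : ℕ) : 0 < Cconst n :=
  mul_pos (Real.rpow_pos_of_pos Real.pi_pos _) (Real.Gamma_pos_of_pos (by positivity))

lemma Ameas (n : ℕ) (x0 : E n) (ε : ℝ) : MeasurableSet {y : E n | ε < ‖x0 - y‖} := by
  have : Continuous fun y : E n => ‖x0 - y‖ := (continuous_const.sub continuous_id).norm
  exact (isOpen_lt continuous_const this).measurableSet

/-- linearity of the kernel integrand -/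
lemma kern_comb (n : ℕ) (u φ : E n → ℝ) (M : ℝ) (x y : E n) :
    kern n (fun z => M * u z - φ z) x y = M * kern n u x y - kern n φ x y := by
  unfold kern
  by_cases hy : y ∈ Metric.ball x 1 <;>
    simp only [indicator_of_mem, indicator_of_notMem, hy, not_false_iff] <;> ring

lemma numerator_props (n : ℕ) (x0 : E n) (v : E n → ℝ)
    (hm : AEStronglyMeasurable v volume)
    (hL0 : Integrable (fun y : E n => |v y| / (1 + ‖y‖ ^ (n+1)))) :
    AEStronglyMeasurable
      (fun y : E n => (Metric.ball x0 1).indicator (fun _ => v x0) y - v y) volume ∧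
    Integrable (fun y : E n =>
      |(Metric.ball x0 1).indicator (fun _ => v x0) y - v y| / (1 + ‖y‖ ^ (n+1))) := by
  set d := n + 1 with hd
  have hindm : AEStronglyMeasurable
      ((Metric.ball x0 1).indicator (fun _ => v x0) : E n → ℝ) volume :=
    (aestronglyMeasurable_const.indicator measurableSet_ball)
  have hnum_m : AEStronglyMeasurable
      (fun y : E n => (Metric.ball x0 1).indicator (fun _ => v x0) y - v y) volume :=
    hindm.sub hm
  refine ⟨hnum_m, ?_⟩
  have hind_int : Integrable ((Metric.ball x0 1).indicator (fun _ => |v x0|) : E n → ℝ) := by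
    rw [integrable_indicator_iff measurableSet_ball]
    exact (integrableOn_const_iff).mpr (Or.inr measure_ball_lt_top)
  refine Integrable.mono' (hind_int.add hL0) ?_ ?_
  · have : AEStronglyMeasurable
        (fun y : E n => (1 + ‖y‖ ^ d : ℝ)) volume :=
      (continuous_const.add ((continuous_norm).pow d)).aestronglyMeasurable
    exact ((hnum_m.norm.aemeasurable.div this.aemeasurable).aestronglyMeasurable).congr
      (Filter.Eventually.of_forall fun y => by simp [Real.norm_eq_abs, hd])
  · refine Filter.Eventually.of_forall fun y => ?_
    have hD : (1:ℝ) ≤ 1 + ‖y‖ ^ d := by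
      have : (0:ℝ) ≤ ‖y‖ ^ d := by positivity
      linarith
    have hDpos : (0:ℝ) < 1 + ‖y‖ ^ d := by positivity
    have h1 : |(Metric.ball x0 1).indicator (fun _ => v x0) y - v y|
        ≤ (Metric.ball x0 1).indicator (fun _ => |v x0|) y + |v y| := by
      refine (abs_sub _ _).trans ?_
      gcongr
      by_cases hy : y ∈ Metric.ball x0 1 <;> simp [hy]
    have h2 : (0:ℝ) ≤ (Metric.ball x0 1).indicator (fun _ => |v x0|) y := by
      by_cases hy : y ∈ Metric.ball x0 1 <;> simp [hy]
    rw [Real.norm_eq_abs, abs_div, abs_of_pos hDpos,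
      abs_abs, div_le_iff₀ hDpos]
    calc |(Metric.ball x0 1).indicator (fun _ => v x0) y - v y|
        ≤ (Metric.ball x0 1).indicator (fun _ => |v x0|) y + |v y| := h1
      _ ≤ (Metric.ball x0 1).indicator (fun _ => |v x0|) y * (1 + ‖y‖^d)
          + (|v y| / (1 + ‖y‖^d)) * (1 + ‖y‖^d) := by
          rw [div_mul_cancel₀ _ hDpos.ne']
          gcongr
          nlinarith
      _ = ((Metric.ball x0 1).indicator (fun _ => |v x0|) y + |v y| / (1 + ‖y‖^d))
          * (1 + ‖y‖^d) := by ring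
lemma key_int (n : ℕ) (x0 : E n) (v : E n → ℝ) (hm : AEStronglyMeasurable v volume)
    (hL0 : Integrable (fun y : E n => |v y| / (1 + ‖y‖ ^ (n+1))))
    (ε : ℝ) (hε : 0 < ε) :
    IntegrableOn (fun y => v y / ‖x0 - y‖ ^ (n+1)) {y : E n | ε < ‖x0 - y‖} := by
  set d := n + 1 with hd
  set ε' : ℝ := min ε 1 with hε'
  have hε'pos : 0 < ε' := lt_min hε one_pos
  have hε'le1 : ε' ≤ 1 := min_le_right _ _
  set a : ℝ := ‖x0‖ with ha
  have hanneg : 0 ≤ a := norm_nonneg _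
  set K : ℝ := (1 + (a + 1) ^ d) / ε' ^ d with hK
  have hKpos : 0 < K := by positivity
  have hKge : 1 + (a+1)^d ≤ K := by
    rw [hK, le_div_iff₀ (by positivity)]
    nlinarith [pow_le_one₀ hε'pos.le hε'le1 (n := d), pow_pos hε'pos d,
      pow_nonneg (by positivity : (0:ℝ) ≤ a + 1) d]
  have hAmeas : MeasurableSet {y : E n | ε < ‖x0 - y‖} := by
    have : Continuous fun y : E n => ‖x0 - y‖ := (continuous_const.sub continuous_id).norm
    exact (isOpen_lt continuous_const this).measurableSet
  have hbound : ∀ y ∈ {y : E n | ε < ‖x0 - y‖},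
      |v y / ‖x0 - y‖ ^ d| ≤ K * (|v y| / (1 + ‖y‖ ^ d)) := by
    intro y hy
    have hr : ε < ‖x0 - y‖ := hy
    have hrpos : (0:ℝ) < ‖x0 - y‖ := hε.trans hr
    set r : ℝ := ‖x0 - y‖ with hrdef
    have hyle : ‖y‖ ≤ a + r := by
      have h2 : ‖y‖ - ‖x0‖ ≤ ‖y - x0‖ := by simpa using norm_sub_norm_le y x0
      have h3 : ‖y - x0‖ = r := norm_sub_rev y x0
      linarith
    have hkey : 1 + ‖y‖ ^ d ≤ K * r ^ d := by
      rcases le_or_gt 1 r with h1 | h1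
      · have h2 : ‖y‖ ^ d ≤ ((a+1) * r) ^ d := by
          apply pow_le_pow_left₀ (norm_nonneg _)
          nlinarith
        have h3 : (1:ℝ) ≤ r ^ d := one_le_pow₀ h1
        have h4 : ((a+1)*r)^d = (a+1)^d * r^d := mul_pow _ _ _
        nlinarith [pow_nonneg (by positivity : (0:ℝ) ≤ a+1) d]
      · have h2 : ‖y‖ ^ d ≤ (a+1) ^ d := by
          apply pow_le_pow_left₀ (norm_nonneg _); nlinarith
        have h3 : ε' ^ d ≤ r ^ d := by
          apply pow_le_pow_left₀ hε'pos.le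
          exact le_trans (min_le_left _ _) hr.le
        have h4 : K * ε' ^ d = 1 + (a+1)^d := by
          rw [hK]; field_simp
        nlinarith
    have habs : |v y / r ^ d| = |v y| / r ^ d := by
      rw [abs_div, abs_of_pos (by positivity : (0:ℝ) < r ^ d)]
    rw [habs, div_le_iff₀ (by positivity : (0:ℝ) < r ^ d)]
    have h1d : (0:ℝ) < 1 + ‖y‖ ^ d := by positivity
    calc |v y| = |v y| * (1 + ‖y‖^d) / (1 + ‖y‖^d) := by field_simp
      _ ≤ |v y| * (K * r^d) / (1 + ‖y‖^d) := by
          gcongr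
      _ = K * (|v y| / (1 + ‖y‖^d)) * r^d := by ring
  -- measurability
  have hnorm_cont : Continuous fun y : E n => ‖x0 - y‖ ^ d := by
    exact ((continuous_const.sub continuous_id).norm).pow d
  have hmm : AEStronglyMeasurable (fun y => v y / ‖x0 - y‖ ^ d)
      (volume.restrict {y : E n | ε < ‖x0 - y‖}) :=
    ((hm.restrict.aemeasurable.div hnorm_cont.aestronglyMeasurable.restrict.aemeasurable).aestronglyMeasurable)
  refine Integrable.mono' ((hL0.const_mul K).restrict) hmm ?_
  refine (ae_restrict_iff' hAmeas).2 (Filter.Eventually.of_forall ?_)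
  intro y hy
  have := hbound y hy
  rw [abs_div, abs_of_nonneg (by positivity : (0:ℝ) ≤ ‖x0 - y‖ ^ d)] at this
  simpa [Real.norm_eq_abs, hd] using this

lemma kern_integrableOn (n : ℕ) (x0 : E n) (v : E n → ℝ)
    (hm : AEStronglyMeasurable v volume)
    (hL0 : Integrable (fun y : E n => |v y| / (1 + ‖y‖ ^ (n+1))))
    (ε : ℝ) (hε : 0 < ε) :
    IntegrableOn (kern n v x0) {y : E n | ε < ‖x0 - y‖} := by
  obtain ⟨h1, h2⟩ := numerator_props n x0 v hm hL0
  have := key_int n x0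
    (fun y => (Metric.ball x0 1).indicator (fun _ => v x0) y - v y) h1 h2 ε hε
  exact this.congr_fun (fun y _ => rfl) (Ameas n x0 ε)

set_option maxHeartbeats 1000000 in
theorem aux_main (n : ℕ) (lam1 rho0 : ℝ)
    (phi u : E n → ℝ)
    (c : E n)
    (hphi_eq : ∀ x ∈ ball c 1,
      ∃ L, Tendsto (fun ε : ℝ => Cconst n * ∫ y in {y : E n | ε < ‖x - y‖}, kern n phi x y)
        (nhdsWithin 0 (Set.Ioi 0)) (nhds L) ∧ L + rho0 * phi x = lam1 * phi x)
    (hphi_out : ∀ x ∉ ball c 1, phi x = 0)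
    (hphi_cont : ContinuousOn phi (closedBall c 1))
    (hphi_pos : ∀ x ∈ ball c 1, 0 < phi x)
    (hu_cont : ContinuousOn u (closedBall c 1))
    (hu_L0 : Integrable (fun x : E n => |u x| / (1 + ‖x‖ ^ (n+1))))
    (hu_pos_cl : ∀ x ∈ closedBall c 1, 0 < u x)
    (hu_pos_out : ∀ x ∉ ball c 1, 0 < u x)
    (hu_ineq : ∀ x ∈ ball c 1,
      ∃ L, Tendsto (fun ε : ℝ => Cconst n * ∫ y in {y : E n | ε < ‖x - y‖}, kern n u x y)
        (nhdsWithin 0 (Set.Ioi 0)) (nhds L) ∧ lam1 * u x ≤ L + rho0 * u x) :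
    False := by
  set d := n + 1 with hd
  -- positivity of u everywhere
  have hupos : ∀ y, 0 < u y := by
    intro y
    by_cases hy : y ∈ ball c 1
    · exact hu_pos_cl y (ball_subset_closedBall hy)
    · exact hu_pos_out y hy
  -- measurability of u
  have hDcont : Continuous (fun y : E n => (1 + ‖y‖ ^ d : ℝ)) :=
    continuous_const.add ((continuous_norm).pow d)
  have hDpos : ∀ y : E n, (0:ℝ) < 1 + ‖y‖ ^ d := fun y => by positivity
  have hu_meas : AEStronglyMeasurable u volume := by
    have h1 : AEStronglyMeasurable (fun y : E n => |u y| / (1 + ‖y‖ ^ d)) volume :=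
      hu_L0.aestronglyMeasurable
    refine ((h1.aemeasurable.mul hDcont.aestronglyMeasurable.aemeasurable).aestronglyMeasurable).congr
      (Filter.Eventually.of_forall fun y => ?_)
    show |u y| / (1 + ‖y‖ ^ d) * (1 + ‖y‖ ^ d) = u y
    rw [div_mul_cancel₀ _ (hDpos y).ne']
    exact abs_of_pos (hupos y)
  -- measurability of phi
  have hphi_eq_ind : phi = (closedBall c 1).indicator phi := by
    funext y
    by_cases hy : y ∈ closedBall c 1
    · rw [indicator_of_mem hy]
    · rw [indicator_of_notMem hy]
      exact hphi_out y (fun h => hy (ball_subset_closedBall h))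
  have hphi_meas : AEStronglyMeasurable phi volume := by
    rw [hphi_eq_ind]
    exact (aestronglyMeasurable_indicator_iff measurableSet_closedBall).2
      (hphi_cont.aestronglyMeasurable measurableSet_closedBall)
  -- phi is bounded and compactly supported, hence in L0
  obtain ⟨Cphi, hCphi⟩ := (isCompact_closedBall c 1).exists_bound_of_continuousOn hphi_cont
  have hphi_L0 : Integrable (fun y : E n => |phi y| / (1 + ‖y‖ ^ d)) := by
    have hind : Integrable ((closedBall c 1).indicator (fun _ => Cphi) : E n → ℝ) := by
      rw [integrable_indicator_iff measurableSet_closedBall]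
      exact (integrableOn_const_iff).mpr (Or.inr measure_closedBall_lt_top)
    refine Integrable.mono' hind ?_ (Filter.Eventually.of_forall fun y => ?_)
    · exact ((hphi_meas.norm.aemeasurable.div
        hDcont.aestronglyMeasurable.aemeasurable).aestronglyMeasurable).congr
        (Filter.Eventually.of_forall fun y => by simp [Real.norm_eq_abs])
    · rw [Real.norm_eq_abs, abs_div, abs_of_pos (hDpos y), abs_abs]
      by_cases hy : y ∈ closedBall c 1
      · rw [indicator_of_mem hy]
        have h1 : |phi y| ≤ Cphi := by simpa [Real.norm_eq_abs] using hCphi y hy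
        have h2 : (1:ℝ) ≤ 1 + ‖y‖ ^ d := by
          have : (0:ℝ) ≤ ‖y‖ ^ d := by positivity
          linarith
        calc |phi y| / (1 + ‖y‖ ^ d) ≤ |phi y| / 1 := by
              apply div_le_div_of_nonneg_left (abs_nonneg _) one_pos h2
          _ = |phi y| := div_one _
          _ ≤ Cphi := h1
      · rw [indicator_of_notMem hy]
        have : phi y = 0 := hphi_out y (fun h => hy (ball_subset_closedBall h))
        rw [this]
        simp
  -- the maximum of phi/u on the closed ball
  have hratio_cont : ContinuousOn (fun y => phi y / u y) (closedBall c 1) :=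
    hphi_cont.div hu_cont (fun y hy => (hu_pos_cl y hy).ne')
  obtain ⟨x0, hx0cb, hx0max⟩ := (isCompact_closedBall c 1).exists_isMaxOn
    ⟨c, mem_closedBall_self zero_le_one⟩ hratio_cont
  set M : ℝ := phi x0 / u x0 with hM
  have hcball : c ∈ ball c 1 := mem_ball_self one_pos
  have hMpos : 0 < M := by
    have h1 : phi c / u c ≤ M := hx0max (mem_closedBall_self zero_le_one)
    have h2 : 0 < phi c / u c :=
      div_pos (hphi_pos c hcball) (hu_pos_cl c (mem_closedBall_self zero_le_one))
    linarith
  have hx0ball : x0 ∈ ball c 1 := by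
    by_contra hx0
    have : phi x0 = 0 := hphi_out x0 hx0
    rw [hM, this] at hMpos
    simp at hMpos
  have hphix0 : phi x0 = M * u x0 := by
    rw [hM, div_mul_cancel₀ _ (hu_pos_cl x0 hx0cb).ne']
  -- the comparison function w = M u - phi
  set w : E n → ℝ := fun y => M * u y - phi y with hw
  have hwx0 : w x0 = 0 := by rw [hw]; simp [← hphix0]
  have hwnonneg : ∀ y, 0 ≤ w y := by
    intro y
    by_cases hy : y ∈ closedBall c 1
    · have h1 : phi y / u y ≤ M := hx0max hy
      have h2 : 0 < u y := hu_pos_cl y hy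
      show 0 ≤ M * u y - phi y
      have := (div_le_iff₀ h2).1 h1
      linarith
    · have h1 : phi y = 0 := hphi_out y (fun h => hy (ball_subset_closedBall h))
      have h2 : 0 < u y := hupos y
      show 0 ≤ M * u y - phi y
      rw [h1]
      nlinarith
  -- kern of w equals -(w y)/ ‖x0-y‖^d
  have hkernw : ∀ y, kern n w x0 y = -(w y) / ‖x0 - y‖ ^ d := by
    intro y
    unfold kern
    rw [hwx0]
    by_cases hy : y ∈ Metric.ball x0 1 <;>
      simp only [indicator_of_mem, indicator_of_notMem, hy, not_false_iff] <;> ring_nf <;> rw [hd] <;> ring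
  -- the limits for u and phi at x0
  obtain ⟨Lphi, hTphi, hEphi⟩ := hphi_eq x0 hx0ball
  obtain ⟨Lu, hTu, hEu⟩ := hu_ineq x0 hx0ball
  -- integrability of the kernels
  have hIu : ∀ ε : ℝ, 0 < ε → IntegrableOn (kern n u x0) {y : E n | ε < ‖x0 - y‖} :=
    fun ε hε => kern_integrableOn n x0 u hu_meas hu_L0 ε hε
  have hIphi : ∀ ε : ℝ, 0 < ε → IntegrableOn (kern n phi x0) {y : E n | ε < ‖x0 - y‖} :=
    fun ε hε => kern_integrableOn n x0 phi hphi_meas hphi_L0 ε hε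
  have hIw : ∀ ε : ℝ, 0 < ε → IntegrableOn (kern n w x0) {y : E n | ε < ‖x0 - y‖} := by
    intro ε hε
    have h1 : IntegrableOn (fun y => M * kern n u x0 y - kern n phi x0 y)
        {y : E n | ε < ‖x0 - y‖} := ((hIu ε hε).const_mul M).sub (hIphi ε hε)
    exact h1.congr_fun (fun y _ => (kern_comb n u phi M x0 y).symm) (Ameas n x0 ε)
  -- splitting the integral
  have heq : ∀ ε : ℝ, 0 < ε →
      Cconst n * ∫ y in {y : E n | ε < ‖x0 - y‖}, kern n w x0 y
      = M * (Cconst n * ∫ y in {y : E n | ε < ‖x0 - y‖}, kern n u x0 y)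
        - Cconst n * ∫ y in {y : E n | ε < ‖x0 - y‖}, kern n phi x0 y := by
    intro ε hε
    have h0 : ∀ y ∈ {y : E n | ε < ‖x0 - y‖},
        kern n w x0 y = M * kern n u x0 y - kern n phi x0 y :=
      fun y _ => kern_comb n u phi M x0 y
    rw [setIntegral_congr_fun (Ameas n x0 ε) h0,
      integral_sub ((hIu ε hε).const_mul M) (hIphi ε hε), integral_const_mul]
    ring
  -- the combined limit
  have hTW : Tendsto (fun ε : ℝ => Cconst n * ∫ y in {y : E n | ε < ‖x0 - y‖}, kern n w x0 y)
      (nhdsWithin 0 (Set.Ioi 0)) (nhds (M * Lu - Lphi)) := by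
    refine Tendsto.congr' ?_ ((hTu.const_mul M).sub hTphi)
    filter_upwards [self_mem_nhdsWithin] with ε hε
    exact (heq ε hε).symm
  -- the limit is nonnegative
  have hLw_nonneg : 0 ≤ M * Lu - Lphi := by
    have h1 : lam1 * phi x0 = lam1 * (M * u x0) := by rw [hphix0]
    have h2 : rho0 * phi x0 = rho0 * (M * u x0) := by rw [hphix0]
    nlinarith [mul_le_mul_of_nonneg_left hEu hMpos.le]
  -- the far set S and its negative contribution
  have hS2 : (0:ℝ) < 2 := by norm_num
  set S : Set (E n) := {y : E n | 2 < ‖x0 - y‖} with hSdef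
  have hSmeas : MeasurableSet S := Ameas n x0 2
  have hfS : IntegrableOn (fun y => w y / ‖x0 - y‖ ^ d) S := by
    have h1 : IntegrableOn (fun y => -(kern n w x0 y)) S := (hIw 2 hS2).neg
    refine IntegrableOn.congr_fun h1 (fun y _ => ?_) hSmeas
    rw [hkernw y]
    ring
  -- the set S avoids the closed ball, so w > 0 there
  have hScb : ∀ y ∈ S, y ∉ closedBall c 1 := by
    intro y hy hycb
    have h1 : dist x0 y ≤ dist x0 c + dist c y := dist_triangle x0 c y
    have h2 : dist x0 c < 1 := mem_ball.1 hx0ball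
    have h3 : dist c y ≤ 1 := by rw [dist_comm]; exact mem_closedBall.1 hycb
    have h4 : (2:ℝ) < dist x0 y := by
      have : dist x0 y = ‖x0 - y‖ := dist_eq_norm x0 y
      rw [this]; exact hy
    linarith
  have hwS : ∀ y ∈ S, 0 < w y := by
    intro y hy
    have h1 : phi y = 0 := hphi_out y
      (fun h => hScb y hy (ball_subset_closedBall h))
    show 0 < M * u y - phi y
    rw [h1]
    have := hupos y
    nlinarith
  -- positivity of the integral over S
  have hcS : 0 < ∫ y in S, w y / ‖x0 - y‖ ^ d := by
    have hnn : 0 ≤ᵐ[volume.restrict S] fun y : E n => w y / ‖x0 - y‖ ^ d := by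
      refine (ae_restrict_iff' hSmeas).2 (Filter.Eventually.of_forall fun y hy => ?_)
      exact div_nonneg (hwnonneg y) (by positivity)
    rw [setIntegral_pos_iff_support_of_nonneg_ae hnn hfS]
    · -- measure of support is positive
      set z : E n := x0 + (4:ℝ) • (EuclideanSpace.single (Fin.last n) (1:ℝ)) with hz
      have hzdist : ‖x0 - z‖ = 4 := by
        rw [hz, sub_add_cancel_left, norm_neg, norm_smul, EuclideanSpace.norm_single]
        norm_num
      have hball_sub : ball z 1 ⊆ (Function.support fun y => w y / ‖x0 - y‖ ^ d) ∩ S := by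
        intro y hy
        have h1 : dist x0 z ≤ dist x0 y + dist y z := dist_triangle x0 y z
        have h2 : dist y z < 1 := mem_ball.1 hy
        have h3 : dist x0 z = 4 := by rw [dist_eq_norm]; exact hzdist
        have h4 : (2:ℝ) < ‖x0 - y‖ := by
          rw [← dist_eq_norm]; linarith
        have hyS : y ∈ S := h4
        refine ⟨?_, hyS⟩
        have h5 : 0 < w y := hwS y hyS
        have h6 : (0:ℝ) < ‖x0 - y‖ ^ d := by positivity
        exact ne_of_gt (div_pos h5 h6)
      calc (0:ENNReal) < volume (ball z 1) := measure_ball_pos volume z one_pos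
        _ ≤ volume ((Function.support fun y => w y / ‖x0 - y‖ ^ d) ∩ S) :=
            measure_mono hball_sub
  -- for small ε the integral is below the S-integral
  have hmono : ∀ ε : ℝ, 0 < ε → ε < 2 →
      (∫ y in {y : E n | ε < ‖x0 - y‖}, kern n w x0 y)
        ≤ -(∫ y in S, w y / ‖x0 - y‖ ^ d) := by
    intro ε hε hε2
    have hsub : S ⊆ {y : E n | ε < ‖x0 - y‖} := by
      intro y hy
      exact lt_trans hε2 hy
    have hfA : IntegrableOn (fun y => w y / ‖x0 - y‖ ^ d) {y : E n | ε < ‖x0 - y‖} := by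
      have h1 : IntegrableOn (fun y => -(kern n w x0 y)) {y : E n | ε < ‖x0 - y‖} :=
        (hIw ε hε).neg
      refine IntegrableOn.congr_fun h1 (fun y _ => ?_) (Ameas n x0 ε)
      rw [hkernw y]
      ring
    have h2 : (∫ y in S, w y / ‖x0 - y‖ ^ d)
        ≤ ∫ y in {y : E n | ε < ‖x0 - y‖}, w y / ‖x0 - y‖ ^ d := by
      refine setIntegral_mono_set hfA ?_ (HasSubset.Subset.eventuallyLE hsub)
      refine (ae_restrict_iff' (Ameas n x0 ε)).2 (Filter.Eventually.of_forall fun y hy => ?_)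
      exact div_nonneg (hwnonneg y) (by positivity)
    have h3 : (∫ y in {y : E n | ε < ‖x0 - y‖}, kern n w x0 y)
        = -(∫ y in {y : E n | ε < ‖x0 - y‖}, w y / ‖x0 - y‖ ^ d) := by
      rw [← integral_neg]
      refine setIntegral_congr_fun (Ameas n x0 ε) (fun y _ => ?_)
      rw [hkernw y]
      ring
    rw [h3]
    linarith
  -- conclude
  have hCn := Cconst_pos n
  have hfinal : M * Lu - Lphi ≤ Cconst n * (-(∫ y in S, w y / ‖x0 - y‖ ^ d)) := by
    refine le_of_tendsto hTW ?_
    filter_upwards [self_mem_nhdsWithin,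
      mem_nhdsWithin_of_mem_nhds (Iio_mem_nhds hS2)] with ε hε1 hε2
    exact mul_le_mul_of_nonneg_left (hmono ε hε1 hε2) hCn.le
  nlinarith

/-- scalar comparison via the first eigenfunction: if φ > 0 is a
first Dirichlet eigenfunction of L_Δ in B₁(Re_n) with eigenvalue λ₁ > 0, then
there is no bounded u, positive and continuous on the closed ball, positive
outside the ball, with L_Δ u ≥ λ₁ u in B₁(Re_n). -/
theorem stmt14 (n : ℕ) (R lam1 : ℝ) (hlam1 : 0 < lam1)
    (phi u : E n → ℝ)
    (hphi_eq : ∀ x ∈ ball (R • EuclideanSpace.single (Fin.last n) (1:ℝ)) 1,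
      ∃ L, logLapAt n phi x L ∧ L + rho n * phi x = lam1 * phi x)
    (hphi_out : ∀ x ∉ ball (R • EuclideanSpace.single (Fin.last n) (1:ℝ)) 1,
      phi x = 0)
    (hphi_cont : ContinuousOn phi
      (closedBall (R • EuclideanSpace.single (Fin.last n) (1:ℝ)) 1))
    (hphi_pos : ∀ x ∈ ball (R • EuclideanSpace.single (Fin.last n) (1:ℝ)) 1,
      0 < phi x)
    (hu_bd : ∃ C, ∀ x, |u x| ≤ C)
    (hu_cont : ContinuousOn u
      (closedBall (R • EuclideanSpace.single (Fin.last n) (1:ℝ)) 1))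
    (hu_C11 : C11loc n u (ball (R • EuclideanSpace.single (Fin.last n) (1:ℝ)) 1))
    (hu_L0 : memL0 n u)
    (hu_pos_cl : ∀ x ∈ closedBall (R • EuclideanSpace.single (Fin.last n) (1:ℝ)) 1,
      0 < u x)
    (hu_pos_out : ∀ x ∉ ball (R • EuclideanSpace.single (Fin.last n) (1:ℝ)) 1,
      0 < u x)
    (hu_ineq : ∀ x ∈ ball (R • EuclideanSpace.single (Fin.last n) (1:ℝ)) 1,
      ∃ L, logLapAt n u x L ∧ lam1 * u x ≤ L + rho n * u x) :
    False := by
  refine aux_main n lam1 (rho n) phi u _ ?_ hphi_out hphi_cont hphi_pos hu_cont hu_L0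
    hu_pos_cl hu_pos_out ?_
  · intro x hx
    obtain ⟨L, hT, hE⟩ := hphi_eq x hx
    exact ⟨L, hT, hE⟩
  · intro x hx
    obtain ⟨L, hT, hE⟩ := hu_ineq x hx
    exact ⟨L, hT, hE⟩
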